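/- Description of the solutions at 0 in the periodic case. Let 0 ≤ α < 1 < β, k := ⌈α+β⌉, A := {0,…,k−1}, γ := α+β−k+1. Suppose u^{α,β} is periodic with minimal period p > 1, and let a := (u^{α,β}₀,…,u^{α,β}_{p−1}) be its period block (then u^{α,β}_{p−1} ≥ 1). Let u ∈ A^ℕ satisfy φ̄_∞^{α,β}(u) = 0 and φ̄_∞^{α,β}(σu) = α, and suppose there exists w ∈ A^ℕ such that for all n ≥ 0: u ≼ σⁿu ≼ w, φ̄_∞^{α,β}(w) = 1 and φ̄_∞^{α,β}(σw) ≤ γ. Then a′⌢v^{α,β} ≼ u ≼ u^{α,β}, where a′ := a₀⋯a_{p−2}(a_{p−1}−1) and ⌢ denotes concatenation of a finite word with a string. Moreover, the following are equivalent: u = u^{α,β}; a is a prefix of u; φ̄_∞^{α,β}(σᵖu) < 1. -/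

import Mathlib

open Filter Set

/-- The shift map on one-sided sequences. -/
def shft (x : ℕ → ℕ) : ℕ → ℕ := fun n => x (n + 1)

/-- Strict lexicographic order on one-sided sequences:
`x ≺ y` iff they differ and `x m < y m` at the first index `m` where they differ. -/
def lexLt (x y : ℕ → ℕ) : Prop := ∃ m, (∀ i, i < m → x i = y i) ∧ x m < y m

/-- Lexicographic order `x ≼ y` on one-sided sequences. -/
def lexLe (x y : ℕ → ℕ) : Prop := x = y ∨ lexLt x y

/-- The map `φ̄^{α,β} : ℝ → [0,1]`:  `0` for `t ≤ α`, `(t-α)/β` for `α ≤ t ≤ α+β`,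
`1` for `t ≥ α+β`. -/
noncomputable def phiB (α β t : ℝ) : ℝ :=
  if t ≤ α then 0 else if α + β ≤ t then 1 else (t - α) / β

/-- `φ̄ₙ^{α,β}(x) = φ̄^{α,β}(x₀ + φ̄^{α,β}(x₁ + ⋯ + φ̄^{α,β}(x_{n-1})⋯))`. -/
noncomputable def phiBN (α β : ℝ) : ℕ → (ℕ → ℕ) → ℝ
  | 0, _ => 0
  | n + 1, x => phiB α β (x 0 + phiBN α β n (shft x))

/-- `φ̄_∞^{α,β}(x) = limₙ φ̄ₙ^{α,β}(x)`; the sequence `φ̄ₙ^{α,β}(x)` is nondecreasing in `n`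
and bounded, so its limit is its supremum. -/
noncomputable def phiBInf (α β : ℝ) (x : ℕ → ℕ) : ℝ := ⨆ n, phiBN α β n x

/-- `T̂_{α,β}(x) = βx + α − ⌊βx + α⌋`. -/
noncomputable def Tlow (α β x : ℝ) : ℝ := β * x + α - ⌊β * x + α⌋

/-- `Ť_{α,β}(x) = βx + α + 1 − ⌈βx + α⌉`. -/
noncomputable def Thigh (α β x : ℝ) : ℝ := β * x + α + 1 - ⌈β * x + α⌉

/-- `k = ⌈α + β⌉`, the size of the alphabet `A = {0, …, k-1}`. -/
noncomputable def kAB (α β : ℝ) : ℕ := (⌈α + β⌉).toNat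

/-- The string `u^{α,β}`, the coding of the orbit of `0`:
`u^{α,β}ₙ = ⌊β T̂ⁿ_{α,β}(0) + α⌋`. -/
noncomputable def uItin (α β : ℝ) : ℕ → ℕ := fun n => (⌊β * (Tlow α β)^[n] 0 + α⌋).toNat

/-- The string `v^{α,β}`, the coding of the orbit of `1`:
`v^{α,β}ₙ = ⌈β Ťⁿ_{α,β}(1) + α⌉ − 1`. -/
noncomputable def vItin (α β : ℝ) : ℕ → ℕ := fun n => (⌈β * (Thigh α β)^[n] 1 + α⌉ - 1).toNat

/-- The shift space `Σ(u,v) = {x ∈ A^ℕ : u ≼ σⁿx ≼ v for all n ≥ 0}`, `A = {0,…,k-1}`. -/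
def SigSet (k : ℕ) (u v : ℕ → ℕ) : Set (ℕ → ℕ) :=
  {x | (∀ i, x i < k) ∧ ∀ n, lexLe u (shft^[n] x) ∧ lexLe (shft^[n] x) v}

/-- The number of words of length `n` in the language of `Σ(u,v)` (prefixes of elements). -/
noncomputable def nWords (k : ℕ) (u v : ℕ → ℕ) (n : ℕ) : ℕ :=
  Nat.card {w : Fin n → ℕ // ∃ x ∈ SigSet k u v, ∀ i : Fin n, x i.1 = w i}

/-- The topological entropy (base 2) of `Σ(u,v)`:
`h = limₙ (1/n) log₂ card(Lₙ)` (the limit exists by subadditivity, so it equals the limsup;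
it is `0` when `Σ(u,v) = ∅`). -/
noncomputable def entS (k : ℕ) (u v : ℕ → ℕ) : ℝ :=
  Filter.limsup (fun n : ℕ => Real.logb 2 (nWords k u v n) / (n : ℝ)) Filter.atTop

/-- Concatenation of the word `w₀ ⋯ w_{p-1}` (the first `p` letters of `w`) with the
string `y`. -/
def wcat (p : ℕ) (w y : ℕ → ℕ) : ℕ → ℕ := fun n => if n < p then w n else y (n - p)

/-!
Write `xₙ = T̂ⁿ(0)`, so that `u^{α,β}ₙ + xₙ₊₁ = β xₙ + α` and `xₙ = φ̄(u^{α,β}ₙ + xₙ₊₁)`.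
Minimality of the period `p` gives `xⱼ ∈ (0, 1)` for `0 < j < p`, and periodicity gives
`x_p = 0`. On `(α, α + β)` the map `φ̄` is injective, so `φ̄_∞(σu) = α = x₁` propagates along
`u`: it agrees with `u^{α,β}` below `p - 1` and `u_{p-1} + φ̄_∞(σᵖu) = u^{α,β}_{p-1}`. Hence either
`u` starts with `a` and `φ̄_∞(σᵖu) = 0`, or it starts with `a′` and `φ̄_∞(σᵖu) = 1`, which forces
`v^{α,β} ≼ σᵖu`. In the first case `u ≼ σⁿu` rules out the second alternative at every later
zero of the coding, so the block `a` repeats forever and `u = u^{α,β}`.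
-/

open Function Topology

section LexOrder

lemma shft_iterate_apply (x : ℕ → ℕ) (k n : ℕ) : shft^[k] x n = x (n + k) := by
  induction k generalizing x with
  | zero => rfl
  | succ k ih => rw [iterate_succ_apply, ih]; rfl

lemma lexLt_irrefl (x : ℕ → ℕ) : ¬ lexLt x x := fun ⟨_, _, h⟩ => lt_irrefl _ h

lemma lexLt_asymm {x y : ℕ → ℕ} (hxy : lexLt x y) (hyx : lexLt y x) : False := by
  obtain ⟨m, hxy, hm⟩ := hxy
  obtain ⟨n, hyx, hn⟩ := hyx
  rcases lt_trichotomy m n with h | rfl | h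
  · exact absurd (hyx m h) (by omega)
  · omega
  · exact absurd (hxy n h) (by omega)

lemma not_lexLt_of_lexLe {x y : ℕ → ℕ} (h : lexLe x y) : ¬ lexLt y x := by
  rcases h with rfl | h
  · exact lexLt_irrefl x
  · exact lexLt_asymm h

lemma lexLe_or_lexLt (x y : ℕ → ℕ) : lexLe x y ∨ lexLt y x := by
  by_cases hxy : x = y
  · exact Or.inl (Or.inl hxy)
  have hex : ∃ n, x n ≠ y n := by
    by_contra! h
    exact hxy (funext h)
  classical
  have hag : ∀ i < Nat.find hex, x i = y i := fun i hi => not_not.1 (Nat.find_min hex hi)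
  rcases (Nat.find_spec hex).lt_or_gt with hlt | hgt
  · exact Or.inl (Or.inr ⟨_, hag, hlt⟩)
  · exact Or.inr ⟨_, fun i hi => (hag i hi).symm, hgt⟩

lemma lexLe.head_lt_or_shft {x y : ℕ → ℕ} (h : lexLe x y) :
    x 0 < y 0 ∨ x 0 = y 0 ∧ lexLe (shft x) (shft y) := by
  rcases h with rfl | ⟨_ | m, hag, hlt⟩
  · exact Or.inr ⟨rfl, Or.inl rfl⟩
  · exact Or.inl hlt
  · exact Or.inr ⟨hag 0 m.succ_pos, Or.inr ⟨m, fun i hi => hag (i + 1) (by omega), hlt⟩⟩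

lemma lexLe_wcat {p : ℕ} {w x y : ℕ → ℕ} (hw : ∀ i < p, w i = y i)
    (h : lexLe x (shft^[p] y)) : lexLe (wcat p w x) y := by
  have hhead : ∀ i < p, wcat p w x i = y i := fun i hi => by simp [wcat, hi, hw i hi]
  have htail : ∀ i, wcat p w x (i + p) = x i := fun i => by simp [wcat]
  rcases h with rfl | ⟨m, hag, hlt⟩
  · refine Or.inl (funext fun i => ?_)
    rcases lt_or_ge i p with hi | hi
    · exact hhead i hi
    · obtain ⟨j, rfl⟩ := Nat.exists_eq_add_of_le' hi
      rw [htail, shft_iterate_apply]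
  · refine Or.inr ⟨m + p, fun i hi => ?_, ?_⟩
    · rcases lt_or_ge i p with hi' | hi'
      · exact hhead i hi'
      · obtain ⟨j, rfl⟩ := Nat.exists_eq_add_of_le' hi'
        rw [htail, hag j (by omega), shft_iterate_apply]
    · rw [htail]
      rwa [shft_iterate_apply] at hlt

end LexOrder

section PhiB

variable {α β : ℝ}

lemma phiB_eq_max_min (hβ : 0 < β) (t : ℝ) :
    phiB α β t = max 0 (min 1 ((t - α) / β)) := by
  unfold phiB
  split_ifs with h1 h2
  · have h : (t - α) / β ≤ 0 := div_nonpos_of_nonpos_of_nonneg (by linarith) hβ.le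
    rw [min_eq_right (h.trans zero_le_one), max_eq_left h]
  · have h : 1 ≤ (t - α) / β := (one_le_div hβ).mpr (by linarith)
    rw [min_eq_left h, max_eq_right zero_le_one]
  · have h0 : 0 ≤ (t - α) / β := div_nonneg (by linarith) hβ.le
    have h1' : (t - α) / β ≤ 1 := (div_le_one hβ).mpr (by linarith)
    rw [min_eq_right h1', max_eq_right h0]

lemma phiB_nonneg (hβ : 0 < β) (t : ℝ) : 0 ≤ phiB α β t := by
  rw [phiB_eq_max_min hβ]
  exact le_max_left _ _

lemma phiB_le_one (hβ : 0 < β) (t : ℝ) : phiB α β t ≤ 1 := by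
  rw [phiB_eq_max_min hβ]
  exact max_le zero_le_one (min_le_left _ _)

lemma phiB_mono (hβ : 0 < β) : Monotone (phiB α β) := by
  intro a b h
  rw [phiB_eq_max_min hβ, phiB_eq_max_min hβ]
  gcongr

lemma phiB_continuous (hβ : 0 < β) : Continuous (phiB α β) := by
  rw [funext (phiB_eq_max_min hβ)]
  fun_prop

lemma phiB_self : phiB α β α = 0 := by simp [phiB]

lemma phiB_mul_add (hβ : 0 < β) {z : ℝ} (h0 : 0 ≤ z) (h1 : z ≤ 1) :
    phiB α β (β * z + α) = z := by
  rw [phiB_eq_max_min hβ, add_sub_cancel_right, mul_div_cancel_left₀ _ hβ.ne', min_eq_right h1,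
    max_eq_right h0]

/-- `φ̄` is strictly increasing on `[α, α + β]`, and constant outside it. -/
lemma phiB_lt_phiB (hβ : 0 < β) {a b : ℝ} (hab : b < a) (ha : α < a) (hb : b < α + β) :
    phiB α β b < phiB α β a := by
  rw [phiB_eq_max_min hβ, phiB_eq_max_min hβ]
  have hb1 : (b - α) / β < 1 := (div_lt_one hβ).2 (by linarith)
  have hba : (b - α) / β < (a - α) / β := by gcongr
  have hpos : 0 < min 1 ((a - α) / β) := lt_min one_pos (div_pos (by linarith) hβ)
  exact max_lt (lt_max_of_lt_right hpos)
    (lt_max_of_lt_right ((min_le_right _ _).trans_lt (lt_min hb1 hba)))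

lemma le_of_phiB_eq_zero (hβ : 0 < β) {t : ℝ} (h : phiB α β t = 0) : t ≤ α := by
  by_contra! ht
  have := phiB_lt_phiB hβ ht ht (by linarith)
  rw [phiB_self, h] at this
  exact lt_irrefl _ this

lemma eq_of_phiB_eq (hβ : 0 < β) {a b : ℝ} (ha : α < a) (ha' : a < α + β)
    (h : phiB α β b = phiB α β a) : b = a := by
  rcases lt_trichotomy b a with hba | rfl | hab
  · exact absurd h (phiB_lt_phiB hβ hba ha (hba.trans ha')).ne
  · rfl
  · exact absurd h (phiB_lt_phiB hβ hab (ha.trans hab) ha').ne'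

end PhiB

section PhiBInf

variable {α β : ℝ}

lemma phiBN_nonneg (hβ : 0 < β) : ∀ (n : ℕ) (x : ℕ → ℕ), 0 ≤ phiBN α β n x
  | 0, _ => le_rfl
  | _ + 1, _ => phiB_nonneg hβ _

lemma phiBN_le_one (hβ : 0 < β) : ∀ (n : ℕ) (x : ℕ → ℕ), phiBN α β n x ≤ 1
  | 0, _ => zero_le_one
  | _ + 1, _ => phiB_le_one hβ _

lemma phiBN_le_succ (hβ : 0 < β) : ∀ (n : ℕ) (x : ℕ → ℕ), phiBN α β n x ≤ phiBN α β (n + 1) x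
  | 0, x => phiBN_nonneg hβ 1 x
  | n + 1, x => phiB_mono hβ (add_le_add_right (phiBN_le_succ hβ n (shft x)) _)

lemma phiBN_mono_lex (hβ : 0 < β) :
    ∀ (n : ℕ) {x y : ℕ → ℕ}, lexLe x y → phiBN α β n x ≤ phiBN α β n y
  | 0, _, _, _ => le_rfl
  | n + 1, x, y, h => by
    refine phiB_mono hβ ?_
    rcases h.head_lt_or_shft with hlt | ⟨heq, hsh⟩
    · have hlt' : (x 0 : ℝ) + 1 ≤ y 0 := by exact_mod_cast hlt
      linarith [phiBN_le_one (α := α) hβ n (shft x), phiBN_nonneg (α := α) hβ n (shft y)]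
    · rw [heq]
      exact add_le_add_right (phiBN_mono_lex hβ n hsh) _

lemma tendsto_phiBN (hβ : 0 < β) (x : ℕ → ℕ) :
    Tendsto (fun n => phiBN α β n x) atTop (𝓝 (phiBInf α β x)) :=
  tendsto_atTop_ciSup (monotone_nat_of_le_succ fun n => phiBN_le_succ hβ n x)
    ⟨1, by rintro _ ⟨n, rfl⟩; exact phiBN_le_one hβ n x⟩

lemma phiBInf_nonneg (hβ : 0 < β) (x : ℕ → ℕ) : 0 ≤ phiBInf α β x :=
  ge_of_tendsto' (tendsto_phiBN hβ x) fun n => phiBN_nonneg hβ n x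

lemma phiBInf_le_one (hβ : 0 < β) (x : ℕ → ℕ) : phiBInf α β x ≤ 1 :=
  le_of_tendsto' (tendsto_phiBN hβ x) fun n => phiBN_le_one hβ n x

lemma phiBInf_mono_lex (hβ : 0 < β) {x y : ℕ → ℕ} (h : lexLe x y) :
    phiBInf α β x ≤ phiBInf α β y :=
  le_of_tendsto_of_tendsto' (tendsto_phiBN hβ x) (tendsto_phiBN hβ y) fun n =>
    phiBN_mono_lex hβ n h

lemma phiBInf_eq (hβ : 0 < β) (x : ℕ → ℕ) :
    phiBInf α β x = phiB α β (x 0 + phiBInf α β (shft x)) :=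
  tendsto_nhds_unique ((tendsto_add_atTop_iff_nat 1).2 (tendsto_phiBN hβ x))
    (((phiB_continuous hβ).tendsto _).comp ((tendsto_phiBN hβ (shft x)).const_add _))

lemma phiBInf_shft_iterate (hβ : 0 < β) (s : ℕ → ℕ) (i : ℕ) :
    phiBInf α β (shft^[i] s) = phiB α β (s i + phiBInf α β (shft^[i + 1] s)) := by
  rw [phiBInf_eq hβ, ← iterate_succ_apply' shft, shft_iterate_apply, zero_add]

lemma phiBInf_eq_zero (hα1 : α < 1) (hβ : 0 < β) {s : ℕ → ℕ} (h : phiBInf α β s = 0) :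
    s 0 = 0 ∧ phiBInf α β (shft s) ≤ α := by
  have hle := le_of_phiB_eq_zero hβ ((phiBInf_eq hβ s).symm.trans h)
  have hsh := phiBInf_nonneg (α := α) hβ (shft s)
  have hs0 : s 0 = 0 := by
    have : (s 0 : ℝ) < 1 := by linarith
    exact_mod_cast Nat.lt_one_iff.mp (by exact_mod_cast this)
  refine ⟨hs0, ?_⟩
  rw [hs0, Nat.cast_zero, zero_add] at hle
  exact hle

end PhiBInf

section Orbits

variable {α β : ℝ}

/-- `xₙ = T̂ⁿ(0)`, so that `u^{α,β}ₙ = ⌊β xₙ + α⌋`. -/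
noncomputable def lowOrbit (α β : ℝ) (n : ℕ) : ℝ := (Tlow α β)^[n] 0

/-- `yₙ = Ťⁿ(1)`, so that `v^{α,β}ₙ = ⌈β yₙ + α⌉ - 1`. -/
noncomputable def highOrbit (α β : ℝ) (n : ℕ) : ℝ := (Thigh α β)^[n] 1

lemma lowOrbit_succ (n : ℕ) : lowOrbit α β (n + 1) = Tlow α β (lowOrbit α β n) :=
  iterate_succ_apply' _ _ _

lemma highOrbit_succ (n : ℕ) : highOrbit α β (n + 1) = Thigh α β (highOrbit α β n) :=
  iterate_succ_apply' _ _ _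

lemma lowOrbit_mem (n : ℕ) : 0 ≤ lowOrbit α β n ∧ lowOrbit α β n < 1 := by
  cases n with
  | zero => exact ⟨le_rfl, zero_lt_one⟩
  | succ n =>
    rw [lowOrbit_succ, Tlow]
    exact ⟨by linarith [Int.floor_le (β * lowOrbit α β n + α)],
      by linarith [Int.lt_floor_add_one (β * lowOrbit α β n + α)]⟩

lemma highOrbit_mem (n : ℕ) : 0 < highOrbit α β n ∧ highOrbit α β n ≤ 1 := by
  cases n with
  | zero => exact ⟨zero_lt_one, le_rfl⟩
  | succ n =>
    rw [highOrbit_succ, Thigh]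
    exact ⟨by linarith [Int.ceil_lt_add_one (β * highOrbit α β n + α)],
      by linarith [Int.le_ceil (β * highOrbit α β n + α)]⟩

lemma uItin_add_lowOrbit_succ (hα0 : 0 ≤ α) (hβ : 0 < β) (n : ℕ) :
    (uItin α β n : ℝ) + lowOrbit α β (n + 1) = β * lowOrbit α β n + α := by
  have hfloor : (0 : ℤ) ≤ ⌊β * lowOrbit α β n + α⌋ :=
    Int.floor_nonneg.2 (by nlinarith [(lowOrbit_mem (α := α) (β := β) n).1])
  have hcast : (uItin α β n : ℝ) = ⌊β * lowOrbit α β n + α⌋ := by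
    exact_mod_cast Int.toNat_of_nonneg hfloor
  rw [hcast, lowOrbit_succ, Tlow]
  ring

lemma vItin_add_highOrbit_succ (hα0 : 0 ≤ α) (hβ : 0 < β) (n : ℕ) :
    (vItin α β n : ℝ) + highOrbit α β (n + 1) = β * highOrbit α β n + α := by
  have hceil : (1 : ℤ) ≤ ⌈β * highOrbit α β n + α⌉ :=
    Int.ceil_pos.2 (by nlinarith [(highOrbit_mem (α := α) (β := β) n).1])
  have hcast : (vItin α β n : ℝ) = ⌈β * highOrbit α β n + α⌉ - 1 := by
    have := Int.toNat_of_nonneg (sub_nonneg.2 hceil)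
    exact_mod_cast this
  rw [hcast, highOrbit_succ, Thigh]
  ring

lemma phiB_uItin_add_lowOrbit (hα0 : 0 ≤ α) (hβ : 0 < β) (n : ℕ) :
    phiB α β (uItin α β n + lowOrbit α β (n + 1)) = lowOrbit α β n := by
  rw [uItin_add_lowOrbit_succ hα0 hβ]
  exact phiB_mul_add hβ (lowOrbit_mem n).1 (lowOrbit_mem n).2.le

lemma phiB_vItin_add_highOrbit (hα0 : 0 ≤ α) (hβ : 0 < β) (n : ℕ) :
    phiB α β (vItin α β n + highOrbit α β (n + 1)) = highOrbit α β n := by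
  rw [vItin_add_highOrbit_succ hα0 hβ]
  exact phiB_mul_add hβ (highOrbit_mem n).1.le (highOrbit_mem n).2

lemma lowOrbit_one (hα0 : 0 ≤ α) (hα1 : α < 1) : lowOrbit α β 1 = α := by
  rw [lowOrbit_succ, Tlow, lowOrbit, iterate_zero_apply, mul_zero, zero_add,
    Int.floor_eq_zero_iff.2 ⟨hα0, hα1⟩, Int.cast_zero, sub_zero]

lemma uItin_zero (hα0 : 0 ≤ α) (hα1 : α < 1) (hβ : 0 < β) : uItin α β 0 = 0 := by
  have h := uItin_add_lowOrbit_succ hα0 hβ 0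
  rw [lowOrbit_one hα0 hα1, lowOrbit, iterate_zero_apply, mul_zero, zero_add,
    add_eq_right] at h
  exact_mod_cast h

lemma phiBInf_lt_highOrbit (hα0 : 0 ≤ α) (hβ : 0 < β) (m : ℕ) :
    ∀ (n : ℕ) (s : ℕ → ℕ), (∀ i < m, s i = vItin α β (i + n)) → s m < vItin α β (m + n) →
      phiBInf α β s < highOrbit α β n := by
  have step : ∀ n s, (s 0 : ℝ) + phiBInf α β (shft s) < vItin α β n + highOrbit α β (n + 1) →
      phiBInf α β s < highOrbit α β n := fun n s h => by
    have ha := vItin_add_highOrbit_succ hα0 hβ n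
    have hy := highOrbit_mem (α := α) (β := β) n
    rw [phiBInf_eq hβ, ← phiB_vItin_add_highOrbit hα0 hβ n]
    exact phiB_lt_phiB hβ h (by nlinarith) (by nlinarith)
  induction m with
  | zero =>
    intro n s _ hlt
    have hlt' : (s 0 : ℝ) + 1 ≤ vItin α β n := by exact_mod_cast (zero_add n ▸ hlt)
    exact step n s (by linarith [phiBInf_le_one (α := α) hβ (shft s),
      (highOrbit_mem (α := α) (β := β) (n + 1)).1])
  | succ m ih =>
    intro n s hag hlt
    have hs0 : s 0 = vItin α β n := by simpa using hag 0 m.succ_pos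
    have htail := ih (n + 1) (shft s)
      (fun i hi => (hag (i + 1) (by omega)).trans (congrArg _ (by omega)))
      (hlt.trans_eq (congrArg _ (by omega)))
    exact step n s (by rw [hs0]; linarith)

lemma vItin_lexLe_of_phiBInf_eq_one (hα0 : 0 ≤ α) (hβ : 0 < β) {s : ℕ → ℕ}
    (hs : phiBInf α β s = 1) : lexLe (vItin α β) s :=
  (lexLe_or_lexLt _ _).resolve_right fun ⟨m, hag, hlt⟩ =>
    (phiBInf_lt_highOrbit hα0 hβ m 0 s hag hlt).ne hs

end Orbits

lemma natCast_eq_and_eq_of_add_eq_add {a b : ℕ} {t x : ℝ} (ht0 : 0 ≤ t) (ht1 : t ≤ 1)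
    (hx0 : 0 < x) (hx1 : x < 1) (h : (a : ℝ) + t = b + x) : a = b ∧ t = x := by
  have hab : a < b + 1 := by exact_mod_cast (show (a : ℝ) < b + 1 by linarith)
  have hba : b < a + 1 := by exact_mod_cast (show (b : ℝ) < a + 1 by linarith)
  obtain rfl : a = b := by omega
  exact ⟨rfl, by linarith⟩

lemma natCast_add_eq_natCast {a b : ℕ} {t : ℝ} (ht0 : 0 ≤ t) (ht1 : t ≤ 1)
    (h : (a : ℝ) + t = b) : a = b ∧ t = 0 ∨ a + 1 = b ∧ t = 1 := by
  have hab : a ≤ b := by exact_mod_cast (show (a : ℝ) ≤ b by linarith)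
  have hba : b ≤ a + 1 := by exact_mod_cast (show (b : ℝ) ≤ a + 1 by linarith)
  rcases (show b = a ∨ b = a + 1 by omega) with rfl | rfl
  · exact Or.inl ⟨rfl, by linarith⟩
  · refine Or.inr ⟨rfl, ?_⟩
    push_cast at h
    linarith

section Periodic

variable {α β : ℝ} {p : ℕ}

lemma shft_iterate_uItin_of_lowOrbit_eq_zero {m : ℕ} (h : lowOrbit α β m = 0) :
    shft^[m] (uItin α β) = uItin α β := by
  funext n
  have horbit : lowOrbit α β (n + m) = lowOrbit α β n := by
    rw [lowOrbit, iterate_add_apply, ← lowOrbit, h, lowOrbit]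
  rw [shft_iterate_apply]
  show (⌊β * lowOrbit α β (n + m) + α⌋).toNat = (⌊β * lowOrbit α β n + α⌋).toNat
  rw [horbit]

lemma lowOrbit_pos (hmin : ∀ m, 1 ≤ m → m < p → shft^[m] (uItin α β) ≠ uItin α β)
    {j : ℕ} (hj : 1 ≤ j) (hjp : j < p) : 0 < lowOrbit α β j :=
  (lowOrbit_mem j).1.lt_of_ne' fun h => hmin j hj hjp (shft_iterate_uItin_of_lowOrbit_eq_zero h)

/-- Equal digits make the two orbits move apart by a factor `β` at each step. -/
lemma lowOrbit_add_period_sub (hα0 : 0 ≤ α) (hβ : 0 < β)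
    (hper : shft^[p] (uItin α β) = uItin α β) (n : ℕ) :
    lowOrbit α β (n + p) - lowOrbit α β n = β ^ n * lowOrbit α β p := by
  induction n with
  | zero => simp [lowOrbit]
  | succ n ih =>
    have hdigit : uItin α β (n + p) = uItin α β n :=
      (shft_iterate_apply _ p n).symm.trans (congrFun hper n)
    have h1 := uItin_add_lowOrbit_succ hα0 hβ (n + p)
    have h2 := uItin_add_lowOrbit_succ hα0 hβ n
    rw [hdigit, Nat.add_right_comm] at h1
    rw [pow_succ]
    linear_combination h1 - h2 + β * ih

lemma lowOrbit_period_eq_zero (hα0 : 0 ≤ α) (hβ : 1 < β)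
    (hper : shft^[p] (uItin α β) = uItin α β) : lowOrbit α β p = 0 := by
  refine le_antisymm (not_lt.1 fun hpos => ?_) (lowOrbit_mem p).1
  obtain ⟨n, hn⟩ := pow_unbounded_of_one_lt (1 / lowOrbit α β p) hβ
  have hgrow : 1 < β ^ n * lowOrbit α β p := by rwa [div_lt_iff₀ hpos] at hn
  have := lowOrbit_add_period_sub hα0 (by linarith) hper n
  linarith [(lowOrbit_mem (α := α) (β := β) (n + p)).2, (lowOrbit_mem (α := α) (β := β) n).1]

lemma uItin_pred_period (hα0 : 0 ≤ α) (hβ : 1 < β) (hp : 1 ≤ p)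
    (hper : shft^[p] (uItin α β) = uItin α β) :
    (uItin α β (p - 1) : ℝ) = β * lowOrbit α β (p - 1) + α := by
  have h := uItin_add_lowOrbit_succ hα0 (by linarith) (p - 1)
  rwa [Nat.sub_add_cancel hp, lowOrbit_period_eq_zero hα0 hβ hper, add_zero] at h

lemma one_le_uItin_pred_period (hα0 : 0 ≤ α) (hβ : 1 < β) (hp : 1 < p)
    (hper : shft^[p] (uItin α β) = uItin α β)
    (hmin : ∀ m, 1 ≤ m → m < p → shft^[m] (uItin α β) ≠ uItin α β) :
    1 ≤ uItin α β (p - 1) := by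
  have hx := lowOrbit_pos hmin (j := p - 1) (by omega) (by omega)
  have hpos : (0 : ℝ) < uItin α β (p - 1) := by
    rw [uItin_pred_period hα0 hβ hp.le hper]
    positivity
  exact_mod_cast hpos

/-- For `0 < j < p` the point `u_j + x_{j+1} = β xⱼ + α` lies in the open interval
`(α, α + β)` where `φ̄` is injective, so coding `xⱼ` pins down letter plus tail. -/
lemma digit_add_phiBInf_eq (hα0 : 0 ≤ α) (hβ : 0 < β)
    (hmin : ∀ m, 1 ≤ m → m < p → shft^[m] (uItin α β) ≠ uItin α β)
    {s : ℕ → ℕ} {j : ℕ} (hj : 1 ≤ j) (hjp : j < p)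
    (h : phiBInf α β (shft^[j] s) = lowOrbit α β j) :
    (s j : ℝ) + phiBInf α β (shft^[j + 1] s) = uItin α β j + lowOrbit α β (j + 1) := by
  have hx := lowOrbit_pos hmin hj hjp
  have hx1 := (lowOrbit_mem (α := α) (β := β) j).2
  have ha := uItin_add_lowOrbit_succ hα0 hβ j
  rw [phiBInf_shft_iterate hβ, ← phiB_uItin_add_lowOrbit hα0 hβ] at h
  exact eq_of_phiB_eq hβ (by nlinarith) (by nlinarith) h

lemma phiBInf_shft_iterate_eq_lowOrbit (hα0 : 0 ≤ α) (hα1 : α < 1) (hβ : 0 < β)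
    (hmin : ∀ m, 1 ≤ m → m < p → shft^[m] (uItin α β) ≠ uItin α β)
    {s : ℕ → ℕ} (hs : phiBInf α β (shft s) = α) :
    ∀ j, 1 ≤ j → j < p →
      (∀ i, 1 ≤ i → i < j → s i = uItin α β i) ∧ phiBInf α β (shft^[j] s) = lowOrbit α β j := by
  intro j hj
  induction j, hj using Nat.le_induction with
  | base => exact fun _ => ⟨fun i hi hi' => absurd hi' (by omega), by
      rw [iterate_one, hs, lowOrbit_one hα0 hα1]⟩
  | succ j hj ih =>
    intro hjp
    obtain ⟨hdig, hj'⟩ := ih (by omega)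
    obtain ⟨hsj, htail⟩ := natCast_eq_and_eq_of_add_eq_add (phiBInf_nonneg hβ _)
      (phiBInf_le_one hβ _) (lowOrbit_pos hmin (by omega) hjp) (lowOrbit_mem _).2
      (digit_add_phiBInf_eq hα0 hβ hmin hj (by omega) hj')
    refine ⟨fun i hi hij => ?_, htail⟩
    rcases (show i < j ∨ i = j by omega) with hij | rfl
    · exact hdig i hi hij
    · exact hsj

lemma prefix_dichotomy (hα0 : 0 ≤ α) (hα1 : α < 1) (hβ : 1 < β) (hp : 1 < p)
    (hper : shft^[p] (uItin α β) = uItin α β)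
    (hmin : ∀ m, 1 ≤ m → m < p → shft^[m] (uItin α β) ≠ uItin α β)
    {s : ℕ → ℕ} (hs0 : s 0 = 0) (hs : phiBInf α β (shft s) = α) :
    (∀ i < p - 1, s i = uItin α β i) ∧
      (s (p - 1) = uItin α β (p - 1) ∧ phiBInf α β (shft^[p] s) = 0 ∨
        s (p - 1) + 1 = uItin α β (p - 1) ∧ phiBInf α β (shft^[p] s) = 1) := by
  have hβ0 : 0 < β := by linarith
  obtain ⟨hdig, hlast⟩ :=
    phiBInf_shft_iterate_eq_lowOrbit hα0 hα1 hβ0 hmin hs (p - 1) (by omega) (by omega)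
  refine ⟨fun i hi => ?_, ?_⟩
  · rcases i with _ | i
    · rw [hs0, uItin_zero hα0 hα1 hβ0]
    · exact hdig _ (by omega) hi
  · have h := digit_add_phiBInf_eq hα0 hβ0 hmin (by omega) (by omega) hlast
    rw [Nat.sub_add_cancel hp.le, lowOrbit_period_eq_zero hα0 hβ hper, add_zero] at h
    exact natCast_add_eq_natCast (phiBInf_nonneg hβ0 _) (phiBInf_le_one hβ0 _) h

end Periodic

section AtZero

variable {α β : ℝ} {p : ℕ}

lemma phiBInf_shft_eq_of_lexLe (hα1 : α < 1) (hβ : 0 < β) {u s : ℕ → ℕ} (hu0 : u 0 = 0)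
    (hu : phiBInf α β (shft u) = α) (hus : lexLe u s) (hs : phiBInf α β s = 0) :
    phiBInf α β (shft s) = α := by
  obtain ⟨hs0, hle⟩ := phiBInf_eq_zero hα1 hβ hs
  rcases hus.head_lt_or_shft with hlt | ⟨-, hsh⟩
  · omega
  · exact hle.antisymm (hu.symm.trans_le (phiBInf_mono_lex hβ hsh))

/-- Since `u ≼ σⁿu`, the second case of `prefix_dichotomy` cannot occur at any shift of `u`
coding `0`; so these shifts recur every `p` letters, each time after the block `a`. -/
lemma eq_uItin_of_prefix (hα0 : 0 ≤ α) (hα1 : α < 1) (hβ : 1 < β) (hp : 1 < p)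
    (hper : shft^[p] (uItin α β) = uItin α β)
    (hmin : ∀ m, 1 ≤ m → m < p → shft^[m] (uItin α β) ≠ uItin α β)
    {u : ℕ → ℕ} (hu0 : phiBInf α β u = 0) (hu : phiBInf α β (shft u) = α)
    (hshift : ∀ n, lexLe u (shft^[n] u)) (hpre : ∀ i < p, u i = uItin α β i) :
    u = uItin α β := by
  have hβ0 : 0 < β := by linarith
  have hhead : u 0 = 0 := (phiBInf_eq_zero hα1 hβ0 hu0).1
  have hblock : ∀ n, phiBInf α β (shft^[n] u) = 0 →
      (∀ i < p, shft^[n] u i = uItin α β i) ∧ phiBInf α β (shft^[p + n] u) = 0 := by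
    intro n hn
    obtain ⟨hdig, hcase⟩ := prefix_dichotomy hα0 hα1 hβ hp hper hmin
      (phiBInf_eq_zero hα1 hβ0 hn).1 (phiBInf_shft_eq_of_lexLe hα1 hβ0 hhead hu (hshift n) hn)
    rcases hcase with ⟨hlast, hzero⟩ | ⟨hlast, -⟩
    · refine ⟨fun i hi => ?_, by rwa [iterate_add_apply]⟩
      rcases (show i < p - 1 ∨ i = p - 1 by omega) with hi | rfl
      exacts [hdig i hi, hlast]
    · have hlt : lexLt (shft^[n] u) u :=
        ⟨p - 1, fun i hi => (hdig i hi).trans (hpre i (by omega)).symm,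
          by rw [hpre (p - 1) (by omega)]; omega⟩
      exact absurd hlt (not_lexLt_of_lexLe (hshift n))
  have hzero : ∀ j, phiBInf α β (shft^[j * p] u) = 0 := by
    intro j
    induction j with
    | zero => rwa [zero_mul]
    | succ j ih => rw [Nat.succ_mul, add_comm]; exact (hblock _ ih).2
  funext n
  have hperiodic : shft^[n / p * p] (uItin α β) = uItin α β := by
    rw [mul_comm, iterate_mul, iterate_fixed hper]
  calc u n = shft^[n / p * p] u (n % p) := by rw [shft_iterate_apply, Nat.mod_add_div']
    _ = uItin α β (n % p) := (hblock _ (hzero _)).1 _ (Nat.mod_lt _ (by omega))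
    _ = uItin α β n := by
      rw [← congrFun hperiodic, shft_iterate_apply, Nat.mod_add_div']

end AtZero

theorem periodic_case_at_zero_general (α β : ℝ) (hα0 : 0 ≤ α) (hα1 : α < 1) (hβ : 1 < β)
    (p : ℕ) (hp : 1 < p)
    (hper : shft^[p] (uItin α β) = uItin α β)
    (hmin : ∀ m, 1 ≤ m → m < p → shft^[m] (uItin α β) ≠ uItin α β)
    (u : ℕ → ℕ)
    (hu0 : phiBInf α β u = 0) (huα : phiBInf α β (shft u) = α)
    (w : ℕ → ℕ)
    (hbetween : ∀ n, lexLe u (shft^[n] u) ∧ lexLe (shft^[n] u) w) :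
    1 ≤ uItin α β (p - 1) ∧
    lexLe (wcat p (fun i => if i = p - 1 then uItin α β (p - 1) - 1 else uItin α β i)
      (vItin α β)) u ∧
    lexLe u (uItin α β) ∧
    ((u = uItin α β ↔ ∀ i, i < p → u i = uItin α β i) ∧
     ((∀ i, i < p → u i = uItin α β i) ↔ phiBInf α β (shft^[p] u) < 1)) := by
  have hβ0 : 0 < β := by linarith
  have hlast_pos := one_le_uItin_pred_period hα0 hβ hp hper hmin
  obtain ⟨hdig, hcase⟩ :=
    prefix_dichotomy hα0 hα1 hβ hp hper hmin (phiBInf_eq_zero hα1 hβ0 hu0).1 huα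
  rcases hcase with ⟨hlast, hzero⟩ | ⟨hlast, hone⟩
  · have hpre : ∀ i < p, u i = uItin α β i := fun i hi => by
      rcases (show i < p - 1 ∨ i = p - 1 by omega) with hi | rfl
      exacts [hdig i hi, hlast]
    have heq := eq_uItin_of_prefix hα0 hα1 hβ hp hper hmin hu0 huα (fun n => (hbetween n).1) hpre
    refine ⟨hlast_pos, Or.inr ⟨p - 1, fun i hi => ?_, ?_⟩, Or.inl heq, iff_of_true heq hpre,
      iff_of_true hpre (by rw [hzero]; exact one_pos)⟩
    · simp [wcat, show i < p by omega, show i ≠ p - 1 by omega, hdig i hi]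
    · simp only [wcat, show p - 1 < p by omega, if_true, hlast]
      omega
  · have hnpre : ¬ ∀ i < p, u i = uItin α β i := fun h => by
      have := h (p - 1) (by omega)
      omega
    refine ⟨hlast_pos, lexLe_wcat (fun i hi => ?_) (vItin_lexLe_of_phiBInf_eq_one hα0 hβ0 hone),
      Or.inr ⟨p - 1, hdig, by omega⟩, iff_of_false (fun h => hnpre fun i _ => h ▸ rfl) hnpre,
      iff_of_false hnpre (by rw [hone]; exact lt_irrefl 1)⟩
    rcases (show i < p - 1 ∨ i = p - 1 by omega) with hi | rfl
    · simp [show i ≠ p - 1 by omega, hdig i hi]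
    · simp only [if_true]
      omega

/-- **Description of the solutions at 0 in the periodic case.** Let `0 ≤ α < 1 < β`,
`k = ⌈α+β⌉`, `γ = α+β−k+1`. Suppose `u^{α,β}` is periodic with minimal period `p > 1`,
with period block `a = (u^{α,β}₀, …, u^{α,β}_{p−1})` (then `u^{α,β}_{p−1} ≥ 1`). Let
`u ∈ A^ℕ` satisfy `φ̄_∞^{α,β}(u) = 0` and `φ̄_∞^{α,β}(σu) = α`, and suppose there is a
`w ∈ A^ℕ` such that for all `n ≥ 0`: `u ≼ σⁿu ≼ w`, `φ̄_∞^{α,β}(w) = 1` and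
`φ̄_∞^{α,β}(σw) ≤ γ`. Then `a′ ⌢ v^{α,β} ≼ u ≼ u^{α,β}`, where
`a′ = a₀ ⋯ a_{p−2} (a_{p−1} − 1)`. Moreover the following are equivalent:
`u = u^{α,β}`; `a` is a prefix of `u`; `φ̄_∞^{α,β}(σᵖu) < 1`. -/
theorem periodic_case_at_zero (α β : ℝ) (hα0 : 0 ≤ α) (hα1 : α < 1) (hβ : 1 < β)
    (p : ℕ) (hp : 1 < p)
    (hper : shft^[p] (uItin α β) = uItin α β)
    (hmin : ∀ m, 1 ≤ m → m < p → shft^[m] (uItin α β) ≠ uItin α β)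
    (u : ℕ → ℕ) (hu : ∀ i, u i < kAB α β)
    (hu0 : phiBInf α β u = 0) (huα : phiBInf α β (shft u) = α)
    (w : ℕ → ℕ) (hw : ∀ i, w i < kAB α β)
    (hbetween : ∀ n, lexLe u (shft^[n] u) ∧ lexLe (shft^[n] u) w)
    (hw1 : phiBInf α β w = 1)
    (hwγ : phiBInf α β (shft w) ≤ α + β - kAB α β + 1) :
    1 ≤ uItin α β (p - 1) ∧
    lexLe (wcat p (fun i => if i = p - 1 then uItin α β (p - 1) - 1 else uItin α β i)
      (vItin α β)) u ∧
    lexLe u (uItin α β) ∧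
    ((u = uItin α β ↔ ∀ i, i < p → u i = uItin α β i) ∧
     ((∀ i, i < p → u i = uItin α β i) ↔ phiBInf α β (shft^[p] u) < 1)) :=
  periodic_case_at_zero_general α β hα0 hα1 hβ p hp hper hmin u hu0 huα w hbetween
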